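/- arXiv:2005.04227 — 2 statements merged into one kernel-verified Lean document; each statement's English description precedes it below -/
import Mathlib

section
/- For every non-negative integer n, the finite sum ∑_{j=0}^{n} (-1/2)^j · E(n+j) / ((n-j)! · j!) equals 2^(-n) / n!, where E(m) denotes the m-th Euler number. -/
/-!
Write `L_e` for the linear functional `X ^ k ↦ e k` on polynomials (`umbralEval e`).
Bernoulli polynomials are umbral, `B_n(x) = L_b((X + x) ^ n)`, which makes their addition
formula a consequence of the binomial theorem; it passes to the Euler polynomials and gives
`E(m) = L_e((X + 1) ^ m)` with `e k = 2 ^ k E_k(0)`. Since `B_{2k+1}(1/2) = B_{2k+1} = 0` for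
`k ≥ 1`, `e` vanishes at even positive indices, and `e 0 = 1`. After clearing factorials the
sum becomes `L_e` applied to
`∑ C(n,j) 2^(n-j) (-1)^j (X + 1)^(n+j) = ((X + 1)(1 - X)) ^ n = (1 - X ^ 2) ^ n`,
an even polynomial with constant term `1`.
-/

/-- The `n`-th Euler polynomial (as a function `ℂ → ℂ`), defined via Bernoulli
polynomials by `E_n(x) = 2^{n+1}/(n+1) * (B_{n+1}((x+1)/2) - B_{n+1}(x/2))`,
which is equivalent to the generating function `2 e^{xt}/(e^t+1) = ∑ E_n(x) t^n/n!`. -/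
noncomputable def eulerPoly (n : ℕ) (x : ℂ) : ℂ :=
  (2 : ℂ) ^ (n + 1) / (n + 1) *
    (Polynomial.aeval ((x + 1) / 2) (Polynomial.bernoulli (n + 1)) -
     Polynomial.aeval (x / 2) (Polynomial.bernoulli (n + 1)))

/-- The `n`-th Euler number, `E_n = 2^n E_n(1/2)`. -/
noncomputable def eulerNumber (n : ℕ) : ℂ := 2 ^ n * eulerPoly n (1 / 2)

open Polynomial Finset

namespace Polynomial

section Umbral

variable {A : Type*} [CommSemiring A] (e : ℕ → A)

noncomputable def umbralEval : A[X] →ₗ[A] A :=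
  lsum fun k => LinearMap.mulRight A (e k)

theorem umbralEval_C_mul_X_pow (a : A) (k : ℕ) : umbralEval e (C a * X ^ k) = a * e k := by
  simp [umbralEval, lsum_apply, C_mul_X_pow_eq_monomial]

theorem umbralEval_mul_C (p : A[X]) (a : A) : umbralEval e (p * C a) = umbralEval e p * a := by
  rw [mul_comm, ← smul_eq_C_mul, map_smul, smul_eq_mul, mul_comm]

theorem umbralEval_X_add_C_pow (x : A) (n : ℕ) :
    umbralEval e ((X + C x) ^ n) = ∑ k ∈ range (n + 1), e k * x ^ (n - k) * n.choose k := by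
  rw [add_pow, map_sum]
  refine sum_congr rfl fun k _ => ?_
  rw [← C_pow, ← C_eq_natCast, mul_assoc, ← C_mul, mul_comm, umbralEval_C_mul_X_pow]
  ring

theorem umbralEval_X_add_C_add_pow (x y : A) (n : ℕ) :
    umbralEval e ((X + C (x + y)) ^ n) =
      ∑ k ∈ range (n + 1), umbralEval e ((X + C x) ^ k) * y ^ (n - k) * n.choose k := by
  rw [C_add, ← add_assoc, add_pow, map_sum]
  refine sum_congr rfl fun k _ => ?_
  rw [← C_pow, ← C_eq_natCast, mul_assoc, ← C_mul, umbralEval_mul_C, mul_assoc]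

end Umbral

theorem umbralEval_one_sub_X_sq_pow {A : Type*} [CommRing A] (e : ℕ → A)
    (he : ∀ k, Even k → k ≠ 0 → e k = 0) (n : ℕ) :
    umbralEval e ((1 - X ^ 2) ^ n) = e 0 := by
  have hterm (i : ℕ) : (-X ^ 2 : A[X]) ^ i * 1 ^ (n - i) * (n.choose i : A[X]) =
      C ((-1 : A) ^ i * n.choose i) * X ^ (2 * i) := by
    rw [neg_pow, ← pow_mul, one_pow, mul_one, ← C_eq_natCast, C_mul, C_pow, C_neg, C_1]
    ring
  rw [sub_eq_neg_add, add_pow, map_sum, sum_eq_single 0]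
  · simpa using umbralEval_C_mul_X_pow e 1 0
  · intro i _ hi
    rw [hterm, umbralEval_C_mul_X_pow, he _ (even_two_mul i) (by omega), mul_zero]
  · simp

section Bernoulli

variable {A : Type*} [CommRing A] [Algebra ℚ A]

theorem aeval_bernoulli_eq_umbralEval (n : ℕ) (x : A) :
    aeval x (bernoulli n) =
      umbralEval (fun k => algebraMap ℚ A (_root_.bernoulli k)) ((X + C x) ^ n) := by
  rw [umbralEval_X_add_C_pow, bernoulli_def, map_sum, ← sum_range_reflect]
  refine sum_congr rfl fun k hk => ?_
  have hkn : k ≤ n := mem_range_succ_iff.mp hk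
  rw [Nat.add_sub_cancel, Nat.sub_sub_self hkn, aeval_monomial, Nat.choose_symm hkn, map_mul,
    map_natCast]
  ring

theorem aeval_bernoulli_add (n : ℕ) (x y : A) :
    aeval (x + y) (bernoulli n) =
      ∑ k ∈ range (n + 1), aeval x (bernoulli k) * y ^ (n - k) * n.choose k := by
  simp_rw [aeval_bernoulli_eq_umbralEval, umbralEval_X_add_C_add_pow]

theorem aeval_bernoulli_half_of_odd {K : Type*} [Field K] [CharZero K] {n : ℕ} (hn : Odd n) :
    aeval (1 / 2 : K) (bernoulli n) = 0 := by
  have h := bernoulli_eval_one_sub n (1 / 2)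
  rw [show (1 : ℚ) - 1 / 2 = 1 / 2 by norm_num, hn.neg_one_pow] at h
  have h0 : (bernoulli n).eval (1 / 2 : ℚ) = 0 := by linarith
  rw [show (1 / 2 : K) = algebraMap ℚ K (1 / 2) by simp,
    aeval_algebraMap_apply_eq_algebraMap_eval, h0, map_zero]

end Bernoulli

end Polynomial

theorem aeval_bernoulli_succ_sub_eq_eulerPoly (m : ℕ) (x : ℂ) :
    aeval ((x + 1) / 2) (bernoulli (m + 1)) - aeval (x / 2) (bernoulli (m + 1)) =
      (m + 1) / 2 ^ (m + 1) * eulerPoly m x := by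
  rw [eulerPoly]
  field_simp

theorem eulerPoly_add (m : ℕ) (x y : ℂ) :
    eulerPoly m (x + y) = ∑ k ∈ range (m + 1), eulerPoly k x * y ^ (m - k) * m.choose k := by
  rw [eulerPoly, show (x + y + 1) / 2 = (x + 1) / 2 + y / 2 by ring,
    show (x + y) / 2 = x / 2 + y / 2 by ring, aeval_bernoulli_add, aeval_bernoulli_add,
    ← sum_sub_distrib, sum_range_succ']
  simp only [← sub_mul, aeval_bernoulli_succ_sub_eq_eulerPoly, Polynomial.bernoulli_zero, map_one,
    sub_self, add_zero, mul_sum]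
  refine sum_congr rfl fun k hk => ?_
  have hchoose : ((m : ℂ) + 1) * m.choose k = (m + 1).choose (k + 1) * ((k : ℂ) + 1) := by
    exact_mod_cast Nat.add_one_mul_choose_eq m k
  rw [← pow_mul_pow_sub 2 (Nat.add_le_add_right (mem_range_succ_iff.mp hk) 1),
    Nat.add_sub_add_right, div_pow]
  field_simp
  linear_combination -eulerPoly k x * y ^ (m - k) * hchoose

theorem eulerPoly_zero_zero : eulerPoly 0 0 = 1 := by
  simp [eulerPoly, Polynomial.bernoulli_one]

theorem eulerPoly_apply_zero_of_even {m : ℕ} (hm : Even m) (hm0 : m ≠ 0) : eulerPoly m 0 = 0 := by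
  rw [eulerPoly, zero_add, zero_div, aeval_bernoulli_half_of_odd hm.add_one,
    ← map_zero (algebraMap ℚ ℂ), aeval_algebraMap_apply_eq_algebraMap_eval, bernoulli_eval_zero,
    bernoulli_eq_zero_of_odd hm.add_one (by omega)]
  simp

theorem eulerNumber_eq_umbralEval (m : ℕ) :
    eulerNumber m = umbralEval (fun k => 2 ^ k * eulerPoly k 0) ((X + 1) ^ m) := by
  rw [← C_1, umbralEval_X_add_C_pow, eulerNumber, ← zero_add (1 / 2 : ℂ), eulerPoly_add, mul_sum]
  refine sum_congr rfl fun k hk => ?_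
  rw [← pow_mul_pow_sub 2 (mem_range_succ_iff.mp hk), one_pow, div_pow, one_pow]
  field_simp

theorem one_sub_sq_pow_eq_sum {R : Type*} [CommRing R] (x : R) (n : ℕ) :
    (1 - x ^ 2) ^ n =
      ∑ j ∈ range (n + 1), (n.choose j * 2 ^ (n - j) * (-1) ^ j : ℤ) • (x + 1) ^ (n + j) := by
  rw [show 1 - x ^ 2 = (x + 1) * (-(x + 1) + 2) by ring, mul_pow, add_pow (-(x + 1)), mul_sum]
  refine sum_congr rfl fun j _ => ?_
  rw [zsmul_eq_mul, neg_pow, pow_add]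
  push_cast
  ring

theorem neg_half_pow_div_factorial_mul_factorial {n j : ℕ} (hj : j ≤ n) :
    (-1 / 2 : ℂ) ^ j / ((n - j).factorial * j.factorial) =
      ((n.choose j * 2 ^ (n - j) * (-1) ^ j : ℤ) : ℂ) / (2 ^ n * n.factorial) := by
  have hfact : (n.factorial : ℂ) = n.choose j * j.factorial * (n - j).factorial := by
    exact_mod_cast (Nat.choose_mul_factorial_mul_factorial hj).symm
  have hchoose : (n.choose j : ℂ) ≠ 0 := by exact_mod_cast (Nat.choose_pos hj).ne'
  rw [hfact, ← pow_mul_pow_sub 2 hj, div_pow, neg_pow, one_pow]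
  push_cast
  field_simp

/-- Euler number sum identity (special case `J = 1`):
`∑_{j=0}^{n} (-1/2)^j E(n+j) / ((n-j)! j!) = 2^{-n} / n!`. -/
theorem euler_number_sum (n : ℕ) :
    ∑ j ∈ Finset.range (n + 1),
      (-1 / 2 : ℂ) ^ j * eulerNumber (n + j) /
        ((Nat.factorial (n - j) : ℂ) * (Nat.factorial j : ℂ)) =
    (2 : ℂ) ^ (-(n : ℤ)) / (Nat.factorial n : ℂ) := by
  calc _ = (∑ j ∈ range (n + 1), (n.choose j * 2 ^ (n - j) * (-1) ^ j : ℤ) • eulerNumber (n + j))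
          / (2 ^ n * n.factorial) := by
        rw [sum_div]
        refine sum_congr rfl fun j hj => ?_
        rw [mul_div_right_comm, neg_half_pow_div_factorial_mul_factorial (mem_range_succ_iff.mp hj),
          zsmul_eq_mul]
        ring
    _ = umbralEval (fun k => 2 ^ k * eulerPoly k 0) ((1 - X ^ 2) ^ n) / (2 ^ n * n.factorial) := by
        simp_rw [eulerNumber_eq_umbralEval, ← map_zsmul, ← map_sum, ← one_sub_sq_pow_eq_sum]
    _ = _ := by
        rw [umbralEval_one_sub_X_sq_pow _ fun k hk hk0 => by
          rw [eulerPoly_apply_zero_of_even hk hk0, mul_zero]]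
        simp [eulerPoly_zero_zero, zpow_neg, div_eq_mul_inv, mul_comm]
end

section
/- For real s > 0 and real a > 0, ∫_0^∞ w^s tanh(w) e^(-a w) dw = 2^(-2-2s) Γ(1+s) (ζ(1+s, 1+a/4) + ζ(1+s, a/4) - 2 ζ(1+s, 1/2 + a/4)). -/
/-!
Write `tanh t = (1 - x)² / (1 - x²)` with `x = e^{-2t}`. Expanding `1 / (1 - x²)` as a geometric
series turns `tanh t · e^{-at}` into a signed sum of exponentials `e^{-(c + 4n) t}` over the three
progressions `c = a, a + 2, a + 4` with weights `1, -2, 1`. Integrating term by term against `t^s`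
(a Mellin transform, justified because `∑ₙ (c + 4n)^{-(1+s)}` converges), each exponential
contributes `Γ(1+s) (c + 4n)^{-(1+s)}`, and each progression sums to `4^{-(1+s)} ζ(1+s, c/4)`.
-/

open MeasureTheory

/-- The Hurwitz zeta function `ζ(s, q)` for a real parameter `q > 0` (analytically
continued in `s`), expressed via Mathlib's `HurwitzZeta.hurwitzZeta` on the unit
interval: `ζ(s,q) = ζ(s, fract q) - ∑_{k < ⌊q⌋} (fract q + k)^{-s}`. -/
noncomputable def hzeta (s : ℂ) (q : ℝ) : ℂ :=
  HurwitzZeta.hurwitzZeta (↑(Int.fract q) : UnitAddCircle) s -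
    ∑ k ∈ Finset.range ⌊q⌋₊, (((Int.fract q : ℝ) : ℂ) + (k : ℂ)) ^ (-s)

open Set Real

lemma hasSum_hzeta {σ : ℂ} (hσ : 1 < σ.re) {q : ℝ} (hq : 0 ≤ q) :
    HasSum (fun n : ℕ => 1 / ((n + q : ℝ) : ℂ) ^ σ) (hzeta σ q) := by
  have hfract : Int.fract q ∈ Icc (0 : ℝ) 1 := ⟨Int.fract_nonneg q, (Int.fract_lt_one q).le⟩
  have hq_eq : ((⌊q⌋₊ : ℝ) : ℂ) + ((Int.fract q : ℝ) : ℂ) = q := by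
    rw [natCast_floor_eq_intCast_floor hq]
    exact_mod_cast Int.floor_add_fract q
  have h := (hasSum_nat_add_iff' ⌊q⌋₊).mpr
    (HurwitzZeta.hasSum_hurwitzZeta_of_one_lt_re hfract hσ)
  simp only [one_div, ← Complex.cpow_neg, add_comm _ ((Int.fract q : ℝ) : ℂ)] at h
  refine h.congr_fun fun n => ?_
  rw [one_div, ← Complex.cpow_neg]
  push_cast at hq_eq ⊢
  congr 1
  linear_combination -hq_eq

lemma hasSum_one_div_add_mul_cpow {σ : ℂ} (hσ : 1 < σ.re) {c d : ℝ} (hc : 0 ≤ c)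
    (hd : 0 < d) :
    HasSum (fun n : ℕ => 1 / ((c + d * n : ℝ) : ℂ) ^ σ)
      (hzeta σ (c / d) / (d : ℂ) ^ σ) := by
  refine ((hasSum_hzeta hσ (div_nonneg hc hd.le)).div_const ((d : ℂ) ^ σ)).congr_fun
    fun n => ?_
  rw [div_div, ← Complex.mul_cpow_ofReal_nonneg (by positivity) hd.le, ← Complex.ofReal_mul]
  congr 3
  field_simp
  ring

lemma hasSum_exp_neg_add_mul (c : ℝ) {d t : ℝ} (hd : 0 < d) (ht : 0 < t) :
    HasSum (fun n : ℕ => rexp (-(c + d * n) * t)) (rexp (-c * t) / (1 - rexp (-d * t))) := by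
  have hlt : rexp (-d * t) < 1 := Real.exp_lt_one_iff.mpr (by nlinarith)
  refine ((hasSum_geometric_of_lt_one (exp_nonneg _) hlt).mul_left (rexp (-c * t))).congr_fun
    fun n => ?_
  rw [← exp_nat_mul, ← exp_add]
  ring_nf

lemma tanh_mul_exp_neg {t : ℝ} (ht : t ≠ 0) (a : ℝ) :
    tanh t * rexp (-a * t) =
      (rexp (-a * t) - 2 * rexp (-(a + 2) * t) + rexp (-(a + 4) * t)) / (1 - rexp (-4 * t)) := by
  have h2 : rexp (-(a + 2) * t) = rexp (-a * t) * rexp (-t) ^ 2 := by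
    rw [← exp_nat_mul, ← exp_add]; ring_nf
  have h4 : rexp (-(a + 4) * t) = rexp (-a * t) * rexp (-t) ^ 4 := by
    rw [← exp_nat_mul, ← exp_add]; ring_nf
  have h4' : rexp (-4 * t) = rexp (-t) ^ 4 := by
    rw [← exp_nat_mul]; ring_nf
  have hden : 1 - rexp (-t) ^ 4 ≠ 0 := by
    rw [← h4', sub_ne_zero, ne_comm, Ne, Real.exp_eq_one_iff]
    simpa using ht
  have hinv : rexp t * rexp (-t) = 1 := by rw [← exp_add, add_neg_cancel, exp_zero]
  rw [h2, h4, h4', Real.tanh_eq]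
  field_simp
  linear_combination 2 * rexp (-t) * (1 - rexp (-t) ^ 2) * hinv

def tanhWeight : ℕ ⊕ ℕ ⊕ ℕ → ℝ :=
  Sum.elim (fun _ => 1) (Sum.elim (fun _ => -2) fun _ => 1)

def tanhFreq (a : ℝ) : ℕ ⊕ ℕ ⊕ ℕ → ℝ :=
  Sum.elim (fun n => a + 4 * n) (Sum.elim (fun n => a + 2 + 4 * n) fun n => a + 4 + 4 * n)

lemma tanhFreq_pos {a : ℝ} (ha : 0 < a) (i : ℕ ⊕ ℕ ⊕ ℕ) : 0 < tanhFreq a i := by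
  rcases i with n | n | n <;> simp only [tanhFreq, Sum.elim_inl, Sum.elim_inr] <;> positivity

lemma hasSum_tanh_mul_exp_neg (a : ℝ) {t : ℝ} (ht : 0 < t) :
    HasSum (fun i => tanhWeight i * rexp (-tanhFreq a i * t)) (tanh t * rexp (-a * t)) := by
  have h4 : (0 : ℝ) < 4 := by norm_num
  rw [tanh_mul_exp_neg ht.ne', add_div, sub_div, sub_eq_add_neg, add_assoc, mul_div_assoc,
    ← neg_mul]
  refine .sum ?_ (.sum ?_ ?_)
  · simpa only [Function.comp_def, tanhWeight, tanhFreq, Sum.elim_inl, one_mul] using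
      hasSum_exp_neg_add_mul a h4 ht
  · exact (hasSum_exp_neg_add_mul (a + 2) h4 ht).mul_left (-2)
  · simpa only [Function.comp_def, tanhWeight, tanhFreq, Sum.elim_inr, one_mul] using
      hasSum_exp_neg_add_mul (a + 4) h4 ht

lemma hasSum_tanhWeight_div_tanhFreq_cpow {σ : ℂ} (hσ : 1 < σ.re) {a : ℝ} (ha : 0 ≤ a) :
    HasSum (fun i => (tanhWeight i : ℂ) / (tanhFreq a i : ℂ) ^ σ)
      ((hzeta σ (a / 4) - 2 * hzeta σ ((a + 2) / 4) + hzeta σ ((a + 4) / 4)) /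
        (4 : ℂ) ^ σ) := by
  have h4 : (0 : ℝ) < 4 := by norm_num
  rw [add_div, sub_div, sub_eq_add_neg, add_assoc, mul_div_assoc, ← neg_mul]
  refine .sum ?_ (.sum ?_ ?_)
  · simpa [Function.comp_def, tanhWeight, tanhFreq] using hasSum_one_div_add_mul_cpow hσ ha h4
  · simpa [Function.comp_def, tanhWeight, tanhFreq, div_eq_mul_one_div (-2 : ℂ)] using
      (hasSum_one_div_add_mul_cpow hσ (by linarith : 0 ≤ a + 2) h4).mul_left (-2)
  · simpa [Function.comp_def, tanhWeight, tanhFreq] using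
      hasSum_one_div_add_mul_cpow hσ (by linarith : 0 ≤ a + 4) h4

lemma hasSum_mellin_tanh_mul_exp_neg {σ : ℂ} (hσ : 1 < σ.re) {a : ℝ} (ha : 0 < a) :
    HasSum (fun i => Complex.Gamma σ * (tanhWeight i : ℂ) / (tanhFreq a i : ℂ) ^ σ)
      (mellin (fun t => ((tanh t * rexp (-a * t) : ℝ) : ℂ)) σ) := by
  have hnorm : Summable fun i => ‖(tanhWeight i : ℂ)‖ / tanhFreq a i ^ σ.re :=
    (summable_norm_iff.mpr (hasSum_tanhWeight_div_tanhFreq_cpow hσ ha.le).summable).congr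
      fun i => by rw [norm_div, Complex.norm_cpow_eq_rpow_re_of_pos (tanhFreq_pos ha i)]
  exact hasSum_mellin (fun i => Or.inr (tanhFreq_pos ha i)) (by linarith)
    (fun t ht => by exact_mod_cast Complex.hasSum_ofReal.mpr (hasSum_tanh_mul_exp_neg a ht))
    hnorm

lemma ofReal_integral_rpow_mul_eq_mellin (f : ℝ → ℝ) (s : ℝ) :
    ((∫ t in Ioi 0, t ^ s * f t : ℝ) : ℂ) = mellin (fun t => (f t : ℂ)) (1 + s) := by
  rw [mellin, ← integral_complex_ofReal]
  refine setIntegral_congr_fun measurableSet_Ioi fun t (ht : 0 < t) => ?_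
  simp [Complex.ofReal_cpow ht.le]

lemma two_cpow_neg_two_sub_two_mul (s : ℝ) :
    (2 : ℂ) ^ (-2 - 2 * (s : ℂ)) = 1 / 4 ^ (1 + (s : ℂ)) := by
  have h : (4 : ℝ) ^ (-(1 + s)) = 2 ^ (-2 - 2 * s) := by
    rw [show (4 : ℝ) = 2 ^ (2 : ℝ) by norm_num, ← Real.rpow_mul zero_le_two]
    ring_nf
  have hC := congrArg Complex.ofReal h
  rw [Complex.ofReal_cpow (by norm_num), Complex.ofReal_cpow zero_le_two] at hC
  push_cast at hC
  rw [one_div, ← Complex.cpow_neg, hC]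

/-- `∫_0^∞ w^s tanh w e^{-aw} dw
  = 2^{-2-2s} Γ(1+s) (ζ(1+s,1+a/4) + ζ(1+s,a/4) - 2 ζ(1+s,1/2+a/4))`
for real `s > 0`, `a > 0`. -/
theorem integral_tanh_exp (s a : ℝ) (hs : 0 < s) (ha : 0 < a) :
    (↑(∫ w in Set.Ioi (0 : ℝ), w ^ s * Real.tanh w * Real.exp (-a * w)) : ℂ) =
      2 ^ (-2 - 2 * (s : ℂ)) * Complex.Gamma (1 + s) *
        (hzeta (1 + s) (1 + a / 4) + hzeta (1 + s) (a / 4) -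
          2 * hzeta (1 + s) (1 / 2 + a / 4)) := by
  have hσ : 1 < (1 + s : ℂ).re := by simpa using hs
  have hdirichlet :=
    (hasSum_tanhWeight_div_tanhFreq_cpow hσ ha.le).mul_left (Complex.Gamma (1 + s))
  simp only [← mul_div_assoc] at hdirichlet
  simp only [mul_assoc (_ ^ s)]
  rw [ofReal_integral_rpow_mul_eq_mellin,
    (hasSum_mellin_tanh_mul_exp_neg hσ ha).unique hdirichlet, two_cpow_neg_two_sub_two_mul,
    show (a + 2) / 4 = 1 / 2 + a / 4 by ring, show (a + 4) / 4 = 1 + a / 4 by ring]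
  ring
end
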